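/- arXiv:1304.5831 — 3 statements merged into one kernel-verified Lean document; each statement's English description precedes it below -/
import Mathlib

section
/- Let (f,g) ∈ 𝒞 with unique minimal set K, and let J ⊆ int(W) be a nonempty open interval with J∩K ≠ ∅. If J ⊆ int(R_f\R_g), then 𝓖(J)∩K ≠ ∅; symmetrically, if J ⊆ int(R_g\R_f), then 𝓕(J)∩K ≠ ∅. -/
open Set Function MeasureTheory

noncomputable section

namespace IFSPaper

/-- The closed unit interval `I = [0,1]` as a subset of `ℝ`. -/
def unitI : Set ℝ := Set.Icc 0 1

/-- Membership in the class `𝒜`: `f, g : I → I` are `C¹` diffeomorphisms onto their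
images with `f 0 = 0`, `g 1 = 1`, `f x < x < g x` on `(0,1)` and `0 < g 0 < f 1 < 1`. -/
structure MemA (f g : ℝ → ℝ) : Prop where
  f_maps : Set.MapsTo f unitI unitI
  g_maps : Set.MapsTo g unitI unitI
  f_c1 : ContDiff ℝ 1 f
  g_c1 : ContDiff ℝ 1 g
  f_inj : Set.InjOn f unitI
  g_inj : Set.InjOn g unitI
  f_deriv_ne : ∀ x ∈ unitI, deriv f x ≠ 0
  g_deriv_ne : ∀ x ∈ unitI, deriv g x ≠ 0
  f_zero : f 0 = 0
  g_one : g 1 = 1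
  f_lt_id : ∀ x ∈ Set.Ioo (0:ℝ) 1, f x < x
  id_lt_g : ∀ x ∈ Set.Ioo (0:ℝ) 1, x < g x
  g0_pos : 0 < g 0
  g0_lt_f1 : g 0 < f 1
  f1_lt_one : f 1 < 1

/-- The element of the semigroup `⟨f,g⟩₊` associated to a word in the two generators
(`true ↦ f`, `false ↦ g`). -/
def word (f g : ℝ → ℝ) : List Bool → ℝ → ℝ
  | [] => id
  | b :: t => (if b then f else g) ∘ word f g t

/-- The semigroup orbit `O₊(x) = {φ x : φ ∈ ⟨f,g⟩₊}` of a point `x`. -/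
def orbitP (f g : ℝ → ℝ) (x : ℝ) : Set ℝ :=
  {y | ∃ w : List Bool, w ≠ [] ∧ word f g w x = y}

/-- `K` is a minimal set for the action of `⟨f,g⟩₊` on `I`. -/
def IsMinimalSet (f g : ℝ → ℝ) (K : Set ℝ) : Prop :=
  K.Nonempty ∧ K ⊆ unitI ∧ ∀ x ∈ K, closure (orbitP f g x) = K

/-- The overlapping region `W = [g 0, f 1]`. -/
def ovW (f g : ℝ → ℝ) : Set ℝ := Set.Icc (g 0) (f 1)

/-- The fundamental domain `Fₙ = [f^[n+1] 1, f^[n] 1]`. -/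
def Fint (f : ℝ → ℝ) (n : ℕ) : Set ℝ := Set.Icc (f^[n+1] 1) (f^[n] 1)

/-- The fundamental domain `Gₙ = [g^[n] 0, g^[n+1] 0]`. -/
def Gint (g : ℝ → ℝ) (n : ℕ) : Set ℝ := Set.Icc (g^[n] 0) (g^[n+1] 0)

/-- Single overlapping property `So`: `f² 1 < g 0` and `f 1 < g² 0`. -/
def So (f g : ℝ → ℝ) : Prop := f (f 1) < g 0 ∧ f 1 < g (g 0)

/-- A (nonempty) closed bounded interval. -/
def IsClosedInterval (A : Set ℝ) : Prop := ∃ a b : ℝ, a ≤ b ∧ A = Set.Icc a b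

/-- A closed bounded interval with nonempty interior. -/
def IsNondegClosedInterval (A : Set ℝ) : Prop := ∃ a b : ℝ, a < b ∧ A = Set.Icc a b

/-- A nonempty open bounded interval. -/
def IsOpenInterval (J : Set ℝ) : Prop := ∃ a b : ℝ, a < b ∧ J = Set.Ioo a b

/-- Hole property `Ho` witnessed by the pair of holes `(Hf, Hg)`. -/
def HoleAt (f g : ℝ → ℝ) (Hf Hg : Set ℝ) : Prop :=
  IsNondegClosedInterval Hf ∧ IsNondegClosedInterval Hg ∧
  Hf ⊆ interior (Fint f 1 \ ovW f g) ∧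
  Hg ⊆ interior (Gint g 1 \ ovW f g) ∧
  g '' Hf = Hg ∧ f '' Hg = Hf

/-- Hole property `Ho`. -/
def Ho (f g : ℝ → ℝ) : Prop := ∃ Hf Hg : Set ℝ, HoleAt f g Hf Hg

/-- The induced (first-return) map `𝓕 : F₁ \ {f 1} → G₁`,
`𝓕 x = g^[-n x] (f⁻¹ x)` where `n x` is least with `g^[-n x] (f⁻¹ x) ∈ G₁`. -/
def calF (f g : ℝ → ℝ) (x : ℝ) : ℝ :=
  (Function.invFunOn g unitI)^[sInf {n : ℕ |
      (Function.invFunOn g unitI)^[n] (Function.invFunOn f unitI x) ∈ Gint g 1}]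
    (Function.invFunOn f unitI x)

/-- The induced (first-return) map `𝓖 : G₁ \ {g 0} → F₁`. -/
def calG (f g : ℝ → ℝ) (x : ℝ) : ℝ :=
  (Function.invFunOn f unitI)^[sInf {n : ℕ |
      (Function.invFunOn f unitI)^[n] (Function.invFunOn g unitI x) ∈ Fint f 1}]
    (Function.invFunOn g unitI x)

/-- Eventual expansion property `Ee`: `𝓕` is uniformly expanding outside `Hf`
and `𝓖` outside `Hg` (at all points where the derivative makes sense). -/
def Ee (f g : ℝ → ℝ) (Hf Hg : Set ℝ) : Prop :=
  ∃ μ : ℝ, 1 < μ ∧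
    (∀ y ∈ Fint f 1 \ Hf, DifferentiableAt ℝ (calF f g) y → μ < deriv (calF f g) y) ∧
    (∀ y ∈ Gint g 1 \ Hg, DifferentiableAt ℝ (calG f g) y → μ < deriv (calG f g) y)

/-- The ruination region `R_f = 𝓕⁻¹(Hg) ⊆ F₁`. -/
def Rf (f g : ℝ → ℝ) (Hg : Set ℝ) : Set ℝ :=
  {x | x ∈ Fint f 1 \ {f 1} ∧ calF f g x ∈ Hg}

/-- The ruination region `R_g = 𝓖⁻¹(Hf) ⊆ G₁`. -/
def Rg (f g : ℝ → ℝ) (Hf : Set ℝ) : Set ℝ :=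
  {x | x ∈ Gint g 1 \ {g 0} ∧ calG f g x ∈ Hf}

/-- Castration property `Ca`: `W ⊆ int R_f ∪ int R_g`. -/
def Ca (f g : ℝ → ℝ) (Hf Hg : Set ℝ) : Prop :=
  ovW f g ⊆ interior (Rf f g Hg) ∪ interior (Rg f g Hf)

/-- Membership in the class `𝒞` with the given holes `(Hf, Hg)`:
`(f,g) ∈ 𝒜` together with `So`, `Ho`, `Ee` and `Ca`. -/
def MemC (f g : ℝ → ℝ) (Hf Hg : Set ℝ) : Prop :=
  MemA f g ∧ So f g ∧ HoleAt f g Hf Hg ∧ Ee f g Hf Hg ∧ Ca f g Hf Hg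

/-- The interval `I₋₁ = [0, 1/3 - ε]` of the appendix example. -/
def Im1 (ε : ℝ) : Set ℝ := Set.Icc 0 (1/3 - ε)

/-- The interval `I₀ = [1/3 + ε, 2/3 - ε]` of the appendix example. -/
def Iz (ε : ℝ) : Set ℝ := Set.Icc (1/3 + ε) (2/3 - ε)

/-- The interval `I₁ = [2/3 + ε, 1]` of the appendix example. -/
def Ip1 (ε : ℝ) : Set ℝ := Set.Icc (2/3 + ε) 1

/-- The inclusion property of the appendix example. -/
def InclusionProp (f g : ℝ → ℝ) (ε : ℝ) : Prop :=
  f '' Im1 ε ⊆ Im1 ε ∧ f '' Iz ε ⊆ interior (Im1 ε) ∧ f '' Ip1 ε ⊆ interior (Iz ε) ∧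
  g '' Ip1 ε ⊆ Ip1 ε ∧ g '' Iz ε ⊆ interior (Ip1 ε) ∧ g '' Im1 ε ⊆ interior (Iz ε)

/-- The strong uniform contraction property of the appendix example. -/
def StrongContraction (f g : ℝ → ℝ) (ε lam : ℝ) : Prop :=
  ∀ x ∈ Im1 ε ∪ Iz ε ∪ Ip1 ε, deriv f x < lam ∧ deriv g x < lam

/-!
Let `x ∈ J ∩ K`. Since `x` lies in the closure of its own orbit, some orbit point `φ x` with
`φ ∈ ⟨f,g⟩₊` lies in `J`, and it is `f y` or `g y` for an orbit point `y` of `x` (or `y = x`).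
Because of `So`, a point of the orbit of `x ∈ int W` lying in `(0, f 1]` (resp. `[g 0, 1)`) is
an `f`-iterate (resp. `g`-iterate) of an orbit point in `F₁` (resp. `G₁`), so the first-return
maps send `f y` and `g y` to orbit points of `x` again. Orbit points never enter the holes, since
`g '' H_f = H_g`, `f '' H_g = H_f` and the holes lie outside `f '' I ∩ g '' I ⊇ W`. Hence
`f y ∉ R_f`, `g y ∉ R_g`, and on `J ⊆ int (R_f \ R_g)` the orbit point is `g y`, with
`𝓖 (g y) ∈ K`.
-/

theorem _root_.Set.InjOn.iterate_invFunOn_iterate {α : Type*} [Nonempty α] {h : α → α}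
    {s : Set α} (hinj : InjOn h s) (hmaps : MapsTo h s s) {p : α} (hp : p ∈ s) :
    ∀ n, (invFunOn h s)^[n] (h^[n] p) = p
  | 0 => rfl
  | n + 1 => by
    rw [iterate_succ_apply, iterate_succ_apply' h,
      hinj.leftInvOn_invFunOn (hmaps.iterate n hp), hinj.iterate_invFunOn_iterate hmaps hp n]

/-- Undoing `h` along a forward `h`-orbit until the first visit to `S` ends at an `h`-iterate
of the starting point `q ∈ S`. -/
theorem _root_.Set.InjOn.exists_iterate_invFunOn_sInf_eq {α : Type*} [Nonempty α]
    {h : α → α} {s S : Set α} (hinj : InjOn h s) (hmaps : MapsTo h s s) {q : α} (hq : q ∈ s)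
    (hqS : q ∈ S) (k : ℕ) :
    ∃ j, (invFunOn h s)^[sInf {n | (invFunOn h s)^[n] (h^[k] q) ∈ S}] (h^[k] q) = h^[j] q := by
  have hback : ∀ n ≤ k, (invFunOn h s)^[n] (h^[k] q) = h^[k - n] q := fun n hn => by
    rw [← Nat.add_sub_cancel' hn, iterate_add_apply,
      hinj.iterate_invFunOn_iterate hmaps (hmaps.iterate _ hq), Nat.add_sub_cancel_left]
  have hk : k ∈ {n | (invFunOn h s)^[n] (h^[k] q) ∈ S} := by
    simpa only [mem_ofPred_eq, hback k le_rfl, Nat.sub_self, iterate_zero_apply] using hqS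
  exact ⟨_, hback _ (Nat.sInf_le hk)⟩

lemma zero_mem_unitI : (0 : ℝ) ∈ unitI := left_mem_Icc.2 zero_le_one

lemma one_mem_unitI : (1 : ℝ) ∈ unitI := right_mem_Icc.2 zero_le_one

lemma Fint_one_eq (f : ℝ → ℝ) : Fint f 1 = Icc (f (f 1)) (f 1) := by
  simp [Fint, iterate_succ_apply']

lemma Gint_one_eq (g : ℝ → ℝ) : Gint g 1 = Icc (g 0) (g (g 0)) := by
  simp [Gint, iterate_succ_apply']

def wordOrbit (f g : ℝ → ℝ) (x : ℝ) : Set ℝ := range fun w => word f g w x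

section Orbit

variable {f g : ℝ → ℝ} {x : ℝ}

lemma self_mem_wordOrbit : x ∈ wordOrbit f g x := ⟨[], rfl⟩

lemma wordOrbit_eq_insert_orbitP : wordOrbit f g x = insert x (orbitP f g x) := by
  ext y
  constructor
  · rintro ⟨_ | ⟨b, w⟩, rfl⟩
    exacts [mem_insert _ _, mem_insert_of_mem _ ⟨_, List.cons_ne_nil b w, rfl⟩]
  · rintro (rfl | ⟨w, -, rfl⟩)
    exacts [self_mem_wordOrbit, ⟨w, rfl⟩]

lemma orbitP_eq_image_union : orbitP f g x = f '' wordOrbit f g x ∪ g '' wordOrbit f g x := by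
  ext y
  constructor
  · rintro ⟨_ | ⟨_ | _, w⟩, hw, rfl⟩
    exacts [absurd rfl hw, Or.inr ⟨_, ⟨w, rfl⟩, rfl⟩, Or.inl ⟨_, ⟨w, rfl⟩, rfl⟩]
  · rintro (⟨_, ⟨w, rfl⟩, rfl⟩ | ⟨_, ⟨w, rfl⟩, rfl⟩)
    exacts [⟨true :: w, List.cons_ne_nil _ _, rfl⟩, ⟨false :: w, List.cons_ne_nil _ _, rfl⟩]

lemma wordOrbit_induction {P : ℝ → Prop} (hx : P x)
    (hf : ∀ y ∈ wordOrbit f g x, P y → P (f y)) (hg : ∀ y ∈ wordOrbit f g x, P y → P (g y)) :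
    ∀ y ∈ wordOrbit f g x, P y := by
  rintro _ ⟨w, rfl⟩
  induction w with
  | nil => exact hx
  | cons b w ih =>
    cases b
    exacts [hg _ ⟨w, rfl⟩ ih, hf _ ⟨w, rfl⟩ ih]

lemma apply_mem_wordOrbit_of_mem_wordOrbit {y : ℝ} (hy : y ∈ wordOrbit f g x) :
    f y ∈ wordOrbit f g x ∧ g y ∈ wordOrbit f g x := by
  obtain ⟨w, rfl⟩ := hy
  exact ⟨⟨true :: w, rfl⟩, ⟨false :: w, rfl⟩⟩

lemma iterate_mem_wordOrbit {h : ℝ → ℝ} (hh : h = f ∨ h = g) {y : ℝ}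
    (hy : y ∈ wordOrbit f g x) (n : ℕ) : h^[n] y ∈ wordOrbit f g x := by
  induction n with
  | zero => exact hy
  | succ n ih =>
    rw [iterate_succ_apply']
    rcases hh with rfl | rfl
    exacts [(apply_mem_wordOrbit_of_mem_wordOrbit ih).1,
      (apply_mem_wordOrbit_of_mem_wordOrbit ih).2]

lemma IsMinimalSet.wordOrbit_subset {K : Set ℝ} (hK : IsMinimalSet f g K) (hx : x ∈ K) :
    wordOrbit f g x ⊆ K := by
  rw [wordOrbit_eq_insert_orbitP, insert_subset_iff, ← hK.2.2 x hx]
  exact ⟨hK.2.2 x hx ▸ hx, subset_closure⟩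

lemma IsMinimalSet.exists_apply_mem_of_isOpen {K J : Set ℝ} (hK : IsMinimalSet f g K)
    (hxK : x ∈ K) (hJ : IsOpen J) (hxJ : x ∈ J) :
    ∃ y ∈ wordOrbit f g x, f y ∈ J ∨ g y ∈ J := by
  have hx : x ∈ closure (orbitP f g x) := (hK.2.2 x hxK).symm ▸ hxK
  obtain ⟨z, hzJ, hz⟩ := mem_closure_iff.1 hx J hJ hxJ
  rw [orbitP_eq_image_union] at hz
  rcases hz with ⟨y, hy, rfl⟩ | ⟨y, hy, rfl⟩
  exacts [⟨y, hy, Or.inl hzJ⟩, ⟨y, hy, Or.inr hzJ⟩]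

end Orbit

namespace MemA

variable {f g : ℝ → ℝ} (hA : MemA f g)
include hA

lemma strictMonoOn_f : StrictMonoOn f unitI :=
  ContinuousOn.strictMonoOn_of_injOn_Icc zero_le_one
    (by rw [hA.f_zero]; exact (hA.g0_pos.trans hA.g0_lt_f1).le)
    hA.f_c1.continuous.continuousOn hA.f_inj

lemma strictMonoOn_g : StrictMonoOn g unitI :=
  ContinuousOn.strictMonoOn_of_injOn_Icc zero_le_one
    (by rw [hA.g_one]; exact (hA.g_maps zero_mem_unitI).2)
    hA.g_c1.continuous.continuousOn hA.g_inj

lemma Fint_one_subset_unitI : Fint f 1 ⊆ unitI := by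
  rw [Fint_one_eq]
  exact Icc_subset_Icc (hA.f_maps (hA.f_maps one_mem_unitI)).1 (hA.f_maps one_mem_unitI).2

lemma Gint_one_subset_unitI : Gint g 1 ⊆ unitI := by
  rw [Gint_one_eq]
  exact Icc_subset_Icc (hA.g_maps zero_mem_unitI).1 (hA.g_maps (hA.g_maps zero_mem_unitI)).2

lemma ovW_subset_unitI : ovW f g ⊆ unitI :=
  Icc_subset_Icc hA.g0_pos.le (hA.f_maps one_mem_unitI).2

lemma wordOrbit_subset_unitI {x : ℝ} (hx : x ∈ unitI) : wordOrbit f g x ⊆ unitI :=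
  wordOrbit_induction hx (fun _ _ hy => hA.f_maps hy) (fun _ _ hy => hA.g_maps hy)

lemma lt_g_zero_of_mem_hole {Hf Hg : Set ℝ} (hH : HoleAt f g Hf Hg) {z : ℝ} (hz : z ∈ Hf) :
    z ∈ unitI ∧ z < g 0 := by
  obtain ⟨⟨hzF, hzF'⟩, hzW⟩ := interior_subset (hH.2.2.1 hz)
  refine ⟨hA.Fint_one_subset_unitI ⟨hzF, hzF'⟩, not_le.1 fun h => hzW ⟨h, ?_⟩⟩
  simpa [iterate_one] using hzF'

lemma f_one_lt_of_mem_hole {Hf Hg : Set ℝ} (hH : HoleAt f g Hf Hg) {z : ℝ} (hz : z ∈ Hg) :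
    z ∈ unitI ∧ f 1 < z := by
  obtain ⟨⟨hzG, hzG'⟩, hzW⟩ := interior_subset (hH.2.2.2.1 hz)
  refine ⟨hA.Gint_one_subset_unitI ⟨hzG, hzG'⟩, not_le.1 fun h => hzW ⟨?_, h⟩⟩
  simpa [iterate_one] using hzG

lemma not_mem_holes_of_mem_wordOrbit {Hf Hg : Set ℝ} (hH : HoleAt f g Hf Hg) {x : ℝ}
    (hx : x ∈ ovW f g) : ∀ y ∈ wordOrbit f g x, y ∉ Hf ∧ y ∉ Hg := by
  have hxI := hA.ovW_subset_unitI hx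
  refine wordOrbit_induction
    ⟨fun h => (hA.lt_g_zero_of_mem_hole hH h).2.not_ge hx.1,
      fun h => (hA.f_one_lt_of_mem_hole hH h).2.not_ge hx.2⟩ ?_ ?_
  · intro y hy ⟨hyf, hyg⟩
    have hyI := hA.wordOrbit_subset_unitI hxI hy
    refine ⟨?_, fun h => (hA.f_one_lt_of_mem_hole hH h).2.not_ge
      (hA.strictMonoOn_f.monotoneOn hyI one_mem_unitI hyI.2)⟩
    rw [← hH.2.2.2.2.2]
    rintro ⟨p, hp, hpy⟩
    exact hyg (hA.f_inj (hA.f_one_lt_of_mem_hole hH hp).1 hyI hpy ▸ hp)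
  · intro y hy ⟨hyf, hyg⟩
    have hyI := hA.wordOrbit_subset_unitI hxI hy
    refine ⟨fun h => (hA.lt_g_zero_of_mem_hole hH h).2.not_ge
      (hA.strictMonoOn_g.monotoneOn zero_mem_unitI hyI hyI.1), ?_⟩
    rw [← hH.2.2.2.2.1]
    rintro ⟨p, hp, hpy⟩
    exact hyf (hA.g_inj (hA.lt_g_zero_of_mem_hole hH hp).1 hyI hpy ▸ hp)

end MemA

section FirstReturn

variable {f g : ℝ → ℝ} (hA : MemA f g) (hSo : So f g) {x : ℝ} (hx : x ∈ Ioo (g 0) (f 1))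
include hA hSo hx

lemma exists_mem_Fint_iterate_eq :
    ∀ y ∈ wordOrbit f g x, 0 < y → y ≤ f 1 →
      ∃ q ∈ wordOrbit f g x, q ∈ Fint f 1 ∧ ∃ k, f^[k] q = y := by
  rw [Fint_one_eq]
  have hxI := hA.ovW_subset_unitI (Ioo_subset_Icc_self hx)
  refine wordOrbit_induction (fun _ _ => ⟨x, self_mem_wordOrbit,
    ⟨(hSo.1.trans hx.1).le, hx.2.le⟩, 0, rfl⟩) ?_ ?_
  · intro y hy ih hfy0 hfy1
    by_cases hF : f (f 1) ≤ f y
    · exact ⟨f y, (apply_mem_wordOrbit_of_mem_wordOrbit hy).1, ⟨hF, hfy1⟩, 0, rfl⟩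
    have hyI := hA.wordOrbit_subset_unitI hxI hy
    have hy1 : y < f 1 :=
      (hA.strictMonoOn_f.lt_iff_lt hyI (hA.f_maps one_mem_unitI)).1 (not_le.1 hF)
    have hy0 : 0 < y :=
      (hA.strictMonoOn_f.lt_iff_lt zero_mem_unitI hyI).1 (hA.f_zero.symm ▸ hfy0)
    obtain ⟨q, hq, hqF, k, rfl⟩ := ih hy0 hy1.le
    exact ⟨q, hq, hqF, k + 1, iterate_succ_apply' ..⟩
  · intro y hy _ _ hgy1
    have hyI := hA.wordOrbit_subset_unitI hxI hy
    have hg0 : g 0 ≤ g y := hA.strictMonoOn_g.monotoneOn zero_mem_unitI hyI hyI.1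
    exact ⟨g y, (apply_mem_wordOrbit_of_mem_wordOrbit hy).2, ⟨(hSo.1.trans_le hg0).le, hgy1⟩,
      0, rfl⟩

lemma exists_mem_Gint_iterate_eq :
    ∀ y ∈ wordOrbit f g x, g 0 ≤ y → y < 1 →
      ∃ q ∈ wordOrbit f g x, q ∈ Gint g 1 ∧ ∃ k, g^[k] q = y := by
  rw [Gint_one_eq]
  have hxI := hA.ovW_subset_unitI (Ioo_subset_Icc_self hx)
  refine wordOrbit_induction (fun _ _ => ⟨x, self_mem_wordOrbit,
    ⟨hx.1.le, (hx.2.trans hSo.2).le⟩, 0, rfl⟩) ?_ ?_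
  · intro y hy _ hfy0 _
    have hyI := hA.wordOrbit_subset_unitI hxI hy
    have hf1 : f y ≤ f 1 := hA.strictMonoOn_f.monotoneOn hyI one_mem_unitI hyI.2
    exact ⟨f y, (apply_mem_wordOrbit_of_mem_wordOrbit hy).1, ⟨hfy0, (hf1.trans_lt hSo.2).le⟩,
      0, rfl⟩
  · intro y hy ih hgy0 hgy1
    by_cases hG : g y ≤ g (g 0)
    · exact ⟨g y, (apply_mem_wordOrbit_of_mem_wordOrbit hy).2, ⟨hgy0, hG⟩, 0, rfl⟩
    have hyI := hA.wordOrbit_subset_unitI hxI hy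
    have hy0 : g 0 < y :=
      (hA.strictMonoOn_g.lt_iff_lt (hA.g_maps zero_mem_unitI) hyI).1 (not_le.1 hG)
    have hy1 : y < 1 :=
      (hA.strictMonoOn_g.lt_iff_lt hyI one_mem_unitI).1 (hA.g_one.symm ▸ hgy1)
    obtain ⟨q, hq, hqG, k, rfl⟩ := ih hy0.le hy1
    exact ⟨q, hq, hqG, k + 1, iterate_succ_apply' ..⟩

lemma calG_apply_g_mem_wordOrbit {y : ℝ} (hy : y ∈ wordOrbit f g x)
    (hgy : g y ∈ Ioo (g 0) (f 1)) : calG f g (g y) ∈ wordOrbit f g x := by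
  have hxI := hA.ovW_subset_unitI (Ioo_subset_Icc_self hx)
  have hyI := hA.wordOrbit_subset_unitI hxI hy
  have hy0 : 0 < y := (hA.strictMonoOn_g.lt_iff_lt zero_mem_unitI hyI).1 hgy.1
  have hy1 : y < g 0 := (hA.strictMonoOn_g.lt_iff_lt hyI (hA.g_maps zero_mem_unitI)).1
    (hgy.2.trans hSo.2)
  obtain ⟨q, hq, hqF, k, rfl⟩ :=
    exists_mem_Fint_iterate_eq hA hSo hx y hy hy0 (hy1.trans hA.g0_lt_f1).le
  obtain ⟨j, hj⟩ := hA.f_inj.exists_iterate_invFunOn_sInf_eq hA.f_maps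
    (hA.wordOrbit_subset_unitI hxI hq) hqF k
  rw [calG, hA.g_inj.leftInvOn_invFunOn hyI, hj]
  exact iterate_mem_wordOrbit (Or.inl rfl) hq j

lemma calF_apply_f_mem_wordOrbit {y : ℝ} (hy : y ∈ wordOrbit f g x)
    (hfy : f y ∈ Ioo (g 0) (f 1)) : calF f g (f y) ∈ wordOrbit f g x := by
  have hxI := hA.ovW_subset_unitI (Ioo_subset_Icc_self hx)
  have hyI := hA.wordOrbit_subset_unitI hxI hy
  have hy1 : y < 1 := (hA.strictMonoOn_f.lt_iff_lt hyI one_mem_unitI).1 hfy.2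
  have hy0 : 0 < y := (hA.strictMonoOn_f.lt_iff_lt zero_mem_unitI hyI).1
    (hA.f_zero.symm ▸ hA.g0_pos.trans hfy.1)
  obtain ⟨q, hq, hqG, k, rfl⟩ := exists_mem_Gint_iterate_eq hA hSo hx y hy
    (hfy.1.trans (hA.f_lt_id _ ⟨hy0, hy1⟩)).le hy1
  obtain ⟨j, hj⟩ := hA.g_inj.exists_iterate_invFunOn_sInf_eq hA.g_maps
    (hA.wordOrbit_subset_unitI hxI hq) hqG k
  rw [calF, hA.f_inj.leftInvOn_invFunOn hyI, hj]
  exact iterate_mem_wordOrbit (Or.inr rfl) hq j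

lemma apply_f_not_mem_Rf {Hf Hg : Set ℝ} (hH : HoleAt f g Hf Hg) {y : ℝ}
    (hy : y ∈ wordOrbit f g x) (hfy : f y ∈ Ioo (g 0) (f 1)) : f y ∉ Rf f g Hg := fun h =>
  (hA.not_mem_holes_of_mem_wordOrbit hH (Ioo_subset_Icc_self hx) _
    (calF_apply_f_mem_wordOrbit hA hSo hx hy hfy)).2 h.2

lemma apply_g_not_mem_Rg {Hf Hg : Set ℝ} (hH : HoleAt f g Hf Hg) {y : ℝ}
    (hy : y ∈ wordOrbit f g x) (hgy : g y ∈ Ioo (g 0) (f 1)) : g y ∉ Rg f g Hf := fun h =>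
  (hA.not_mem_holes_of_mem_wordOrbit hH (Ioo_subset_Icc_self hx) _
    (calG_apply_g_mem_wordOrbit hA hSo hx hy hgy)).1 h.2

end FirstReturn

/-- for `(f,g) ∈ 𝒞` with minimal set `K` and a nonempty open interval
`J ⊆ int W` meeting `K`: if `J ⊆ int (R_f \ R_g)` then `𝓖(J)` meets `K`, and if
`J ⊆ int (R_g \ R_f)` then `𝓕(J)` meets `K`. -/
theorem image_meets_minimal_set_overlap (f g : ℝ → ℝ) (Hf Hg K J : Set ℝ)
    (hC : MemC f g Hf Hg) (hK : IsMinimalSet f g K)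
    (hJ : IsOpenInterval J) (hJW : J ⊆ interior (ovW f g)) (hJK : (J ∩ K).Nonempty) :
    (J ⊆ interior (Rf f g Hg \ Rg f g Hf) → ((calG f g '' J) ∩ K).Nonempty) ∧
    (J ⊆ interior (Rg f g Hf \ Rf f g Hg) → ((calF f g '' J) ∩ K).Nonempty) := by
  obtain ⟨hA, hSo, hH, -, -⟩ := hC
  obtain ⟨x, hxJ, hxK⟩ := hJK
  rw [ovW, interior_Icc] at hJW
  have hJo : IsOpen J := by
    obtain ⟨a, b, -, rfl⟩ := hJ
    exact isOpen_Ioo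
  have hx := hJW hxJ
  obtain ⟨y, hy, hfy | hgy⟩ := hK.exists_apply_mem_of_isOpen hxK hJo hxJ
  · refine ⟨fun hJR => ?_, fun _ => ?_⟩
    · exact absurd (interior_subset (hJR hfy)).1 (apply_f_not_mem_Rf hA hSo hx hH hy (hJW hfy))
    · exact ⟨_, mem_image_of_mem _ hfy,
        hK.wordOrbit_subset hxK (calF_apply_f_mem_wordOrbit hA hSo hx hy (hJW hfy))⟩
  · refine ⟨fun _ => ?_, fun hJR => ?_⟩
    · exact ⟨_, mem_image_of_mem _ hgy,
        hK.wordOrbit_subset hxK (calG_apply_g_mem_wordOrbit hA hSo hx hy (hJW hgy))⟩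
    · exact absurd (interior_subset (hJR hgy)).1 (apply_g_not_mem_Rg hA hSo hx hH hy (hJW hgy))

end IFSPaper
end
end

section
/- Fix ε∈(0,1/6) and λ∈(0,1/2), and set I₋₁:=[0,1/3−ε], I₀:=[1/3+ε,2/3−ε], I₁:=[2/3+ε,1]. Let (f,g) ∈ 𝒜 satisfy the inclusion property: f(I₋₁)⊆I₋₁, f(I₀)⊆int(I₋₁), f(I₁)⊆int(I₀), g(I₁)⊆I₁, g(I₀)⊆int(I₁), g(I₋₁)⊆int(I₀); and the strong uniform contraction property: f′(x)<λ and g′(x)<λ for all x∈I₋₁∪I₀∪I₁. Then the unique minimal set K of ⟨f,g⟩₊ is homeomorphic to the Cantor set (equivalently, K is nonempty, compact, perfect and totally disconnected). -/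
open Set Function MeasureTheory

noncomputable section

namespace IFSPaper

/-!
A minimal set `K` is compact and satisfies `K ⊆ f K ∪ g K`, because `f K ∪ g K` is a closed
invariant subset of `K`. The inclusion property makes `Λ = I₋₁ ∪ I₀ ∪ I₁` invariant, and `K ⊆ Λ`
because `f ∘ f` sends all of `I` into `I₋₁`. On each of the three intervals `f` and `g` are
monotone with derivative below `λ`, hence `λ`-Lipschitz, so they shrink Lebesgue measure by the
factor `λ`; thus `|K| ≤ 2λ |K|`, and `2λ < 1` forces `|K| = 0`. A null subset of `ℝ` contains no
interval, so `K` is totally disconnected. Finally `K` is infinite (the `f`-orbit of a point of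
`K ∩ (0,1)` is strictly decreasing), and if one point `y` of `K` were isolated, then every
`z ∈ K` would be: some word `w` sends `z` to `y`, and `w` is injective and continuous. A compact
set all of whose points are isolated is finite.
-/

open Filter
open scoped NNReal ENNReal Topology

section Words

variable {f g : ℝ → ℝ}

lemma word_mapsTo {S : Set ℝ} (hf : MapsTo f S S) (hg : MapsTo g S S) (w : List Bool) :
    MapsTo (word f g w) S S := by
  induction w with
  | nil => exact mapsTo_id S
  | cons b t ih =>
    cases b
    · exact hg.comp ih
    · exact hf.comp ih

lemma word_injOn {S : Set ℝ} (hf : MapsTo f S S) (hg : MapsTo g S S)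
    (hf' : InjOn f S) (hg' : InjOn g S) (w : List Bool) : InjOn (word f g w) S := by
  induction w with
  | nil => exact injOn_id S
  | cons b t ih =>
    cases b
    · exact hg'.comp ih (word_mapsTo hf hg t)
    · exact hf'.comp ih (word_mapsTo hf hg t)

lemma continuous_word (hf : Continuous f) (hg : Continuous g) (w : List Bool) :
    Continuous (word f g w) := by
  induction w with
  | nil => exact continuous_id
  | cons b t ih =>
    cases b
    · exact hg.comp ih
    · exact hf.comp ih

lemma orbitP_subset {S : Set ℝ} (hf : MapsTo f S S) (hg : MapsTo g S S) {x : ℝ} (hx : x ∈ S) :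
    orbitP f g x ⊆ S := by
  rintro _ ⟨w, -, rfl⟩
  exact word_mapsTo hf hg w hx

end Words

namespace IsMinimalSet

variable {f g : ℝ → ℝ} {K : Set ℝ}

lemma subset_unitI (hK : IsMinimalSet f g K) : K ⊆ unitI := hK.2.1

lemma closure_orbitP (hK : IsMinimalSet f g K) {x : ℝ} (hx : x ∈ K) :
    closure (orbitP f g x) = K := hK.2.2 x hx

lemma isClosed (hK : IsMinimalSet f g K) : IsClosed K := by
  obtain ⟨x, hx⟩ := hK.1
  rw [← hK.closure_orbitP hx]
  exact isClosed_closure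

lemma isCompact (hK : IsMinimalSet f g K) : IsCompact K :=
  isCompact_Icc.of_isClosed_subset hK.isClosed hK.subset_unitI

lemma orbitP_subset (hK : IsMinimalSet f g K) {x : ℝ} (hx : x ∈ K) : orbitP f g x ⊆ K := by
  rw [← hK.closure_orbitP hx]
  exact subset_closure

lemma mapsTo_left (hK : IsMinimalSet f g K) : MapsTo f K K :=
  fun _ hx => hK.orbitP_subset hx ⟨[true], List.cons_ne_nil _ _, rfl⟩

lemma mapsTo_right (hK : IsMinimalSet f g K) : MapsTo g K K :=
  fun _ hx => hK.orbitP_subset hx ⟨[false], List.cons_ne_nil _ _, rfl⟩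

lemma subset_of_mapsTo (hK : IsMinimalSet f g K) {C : Set ℝ} (hC : IsClosed C)
    (hf : MapsTo f C C) (hg : MapsTo g C C) {x : ℝ} (hxK : x ∈ K) (hxC : x ∈ C) : K ⊆ C := by
  rw [← hK.closure_orbitP hxK]
  exact closure_minimal (IFSPaper.orbitP_subset hf hg hxC) hC

lemma subset_image_union_image (hK : IsMinimalSet f g K) (hf : Continuous f)
    (hg : Continuous g) : K ⊆ f '' K ∪ g '' K := by
  obtain ⟨x, hx⟩ := hK.1
  have hsub : f '' K ∪ g '' K ⊆ K :=
    union_subset hK.mapsTo_left.image_subset hK.mapsTo_right.image_subset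
  refine hK.subset_of_mapsTo ((hK.isCompact.image hf).union (hK.isCompact.image hg)).isClosed
    (fun y hy => Or.inl (mem_image_of_mem f (hsub hy)))
    (fun y hy => Or.inr (mem_image_of_mem g (hsub hy)))
    (hK.mapsTo_left hx) (Or.inl (mem_image_of_mem f hx))

lemma preperfect (hK : IsMinimalSet f g K) (hf : Continuous f) (hg : Continuous g)
    (hinj : ∀ w, InjOn (word f g w) K) (hinf : K.Infinite) : Preperfect K := by
  by_contra hnot
  obtain ⟨y, hyK, hy⟩ : ∃ y ∈ K, ¬AccPt y (𝓟 K) := by simpa [Preperfect] using hnot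
  rw [accPt_iff_nhds] at hy
  push Not at hy
  obtain ⟨U, hU, hUy⟩ := hy
  have hisolated : ∀ z ∈ K, ¬AccPt z (𝓟 K) := by
    intro z hz
    obtain ⟨_, hpU, w, hw, rfl⟩ :=
      mem_closure_iff_nhds.mp ((hK.closure_orbitP hz).symm ▸ hyK) U hU
    have hwz : word f g w z = y := hUy _ ⟨hpU, hK.orbitP_subset hz ⟨w, hw, rfl⟩⟩
    rw [accPt_iff_nhds]
    push Not
    refine ⟨word f g w ⁻¹' U, (continuous_word hf hg w).continuousAt.preimage_mem_nhds
      (hwz ▸ hU), fun q ⟨hqU, hqK⟩ => hinj w hqK hz ?_⟩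
    rw [hwz]
    exact hUy _ ⟨hqU, hK.orbitP_subset hqK ⟨w, hw, rfl⟩⟩
  exact hinf (hK.isCompact.finite
    (isDiscrete_iff_discreteTopology.mpr (discreteTopology_of_noAccPts hisolated)))

end IsMinimalSet

namespace MemA

variable {f g : ℝ → ℝ}

lemma strictMonoOn_left (hA : MemA f g) : StrictMonoOn f unitI :=
  hA.f_c1.continuous.continuousOn.strictMonoOn_of_injOn_Icc zero_le_one
    (by linarith [hA.f_zero, hA.g0_pos, hA.g0_lt_f1]) hA.f_inj

lemma strictMonoOn_right (hA : MemA f g) : StrictMonoOn g unitI :=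
  hA.g_c1.continuous.continuousOn.strictMonoOn_of_injOn_Icc zero_le_one
    (by linarith [hA.g_one, hA.g0_lt_f1, hA.f1_lt_one]) hA.g_inj

lemma mapsTo_left_Ioo (hA : MemA f g) : MapsTo f (Ioo 0 1) (Ioo 0 1) := fun x hx =>
  ⟨hA.f_zero ▸ hA.strictMonoOn_left ⟨le_rfl, zero_le_one⟩ (Ioo_subset_Icc_self hx) hx.1,
    (hA.f_lt_id x hx).trans hx.2⟩

lemma left_right_mem_Ioo (hA : MemA f g) {x : ℝ} (hx : x ∈ unitI) : f (g x) ∈ Ioo 0 1 := by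
  have hgx : g x ∈ unitI := hA.g_maps hx
  have hgx_pos : 0 < g x :=
    hA.g0_pos.trans_le (hA.strictMonoOn_right.monotoneOn ⟨le_rfl, zero_le_one⟩ hx hx.1)
  refine ⟨hA.f_zero ▸ hA.strictMonoOn_left ⟨le_rfl, zero_le_one⟩ hgx hgx_pos, ?_⟩
  exact (hA.strictMonoOn_left.monotoneOn hgx ⟨zero_le_one, le_rfl⟩ hgx.2).trans_lt hA.f1_lt_one

end MemA

lemma IsMinimalSet.infinite {f g : ℝ → ℝ} {K : Set ℝ} (hK : IsMinimalSet f g K) (hA : MemA f g) :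
    K.Infinite := by
  obtain ⟨x, hx⟩ := hK.1
  set y := f (g x)
  have hyK : y ∈ K := hK.mapsTo_left (hK.mapsTo_right hx)
  have hy : y ∈ Ioo 0 1 := hA.left_right_mem_Ioo (hK.subset_unitI hx)
  have hanti : StrictAnti fun n => f^[n] y := strictAnti_nat_of_succ_lt fun n => by
    rw [iterate_succ_apply']
    exact hA.f_lt_id _ (hA.mapsTo_left_Ioo.iterate n hy)
  exact infinite_of_injective_forall_mem hanti.injective fun n => hK.mapsTo_left.iterate n hyK

def ShrinksVolumeOn (f : ℝ → ℝ) (C : ℝ≥0∞) (A : Set ℝ) : Prop :=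
  ∀ S ⊆ A, volume (f '' S) ≤ C * volume S

lemma shrinksVolumeOn_of_lipschitzOnWith {f : ℝ → ℝ} {C : ℝ≥0} {A : Set ℝ}
    (h : LipschitzOnWith C f A) : ShrinksVolumeOn f C A := fun S hS => by
  simpa [hausdorffMeasure_real] using (h.mono hS).hausdorffMeasure_image_le zero_le_one

lemma ShrinksVolumeOn.union {f : ℝ → ℝ} {C : ℝ≥0∞} {A B : Set ℝ} (hA : MeasurableSet A)
    (hfA : ShrinksVolumeOn f C A) (hfB : ShrinksVolumeOn f C B) :
    ShrinksVolumeOn f C (A ∪ B) := by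
  intro S hS
  calc volume (f '' S) = volume (f '' (S ∩ A) ∪ f '' (S \ A)) := by
        rw [← image_union, inter_union_sdiff]
    _ ≤ volume (f '' (S ∩ A)) + volume (f '' (S \ A)) := measure_union_le _ _
    _ ≤ C * volume (S ∩ A) + C * volume (S \ A) :=
        add_le_add (hfA _ inter_subset_right) (hfB _ fun x hx => (hS hx.1).resolve_left hx.2)
    _ = C * volume S := by rw [← mul_add, measure_inter_add_sdiff S hA]

lemma lipschitzOnWith_of_monotoneOn_of_deriv_le {f : ℝ → ℝ} {D : Set ℝ} {C : ℝ≥0}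
    (hD : Convex ℝ D) (hf : Differentiable ℝ f) (hmono : MonotoneOn f D)
    (hderiv : ∀ x ∈ D, deriv f x ≤ C) : LipschitzOnWith C f D := by
  refine LipschitzOnWith.of_dist_le_mul fun x hx y hy => ?_
  wlog hyx : y ≤ x generalizing x y
  · rw [dist_comm, dist_comm x]
    exact this y hy x hx (le_of_not_ge hyx)
  rw [Real.dist_eq, Real.dist_eq, abs_of_nonneg (sub_nonneg.2 (hmono hy hx hyx)),
    abs_of_nonneg (sub_nonneg.2 hyx)]
  exact hD.image_sub_le_mul_sub_of_deriv_le hf.continuous.continuousOn hf.differentiableOn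
    (fun z hz => hderiv z (interior_subset hz)) y hy x hx hyx

lemma shrinksVolumeOn_Icc {f : ℝ → ℝ} {a b lam : ℝ} (hf : Differentiable ℝ f)
    (hmono : MonotoneOn f (Icc a b)) (hderiv : ∀ x ∈ Icc a b, deriv f x < lam) :
    ShrinksVolumeOn f (ENNReal.ofReal lam) (Icc a b) :=
  shrinksVolumeOn_of_lipschitzOnWith <| lipschitzOnWith_of_monotoneOn_of_deriv_le
    (convex_Icc a b) hf hmono fun x hx => (hderiv x hx).le.trans (Real.le_coe_toNNReal lam)

lemma volume_eq_zero_of_subset_image_union {f g : ℝ → ℝ} {C : ℝ≥0∞} {A K : Set ℝ}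
    (hC : 2 * C < 1) (hK : volume K ≠ ∞) (hKA : K ⊆ A) (hf : ShrinksVolumeOn f C A)
    (hg : ShrinksVolumeOn g C A) (hKfg : K ⊆ f '' K ∪ g '' K) : volume K = 0 := by
  have hle : volume K ≤ 2 * C * volume K := calc
    volume K ≤ volume (f '' K) + volume (g '' K) := (measure_mono hKfg).trans (measure_union_le _ _)
    _ ≤ C * volume K + C * volume K := add_le_add (hf K hKA) (hg K hKA)
    _ = 2 * C * volume K := by ring
  by_contra h0
  exact (hle.trans_lt (by simpa using ENNReal.mul_lt_mul_left h0 hK hC)).false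

lemma isTotallyDisconnected_of_volume_eq_zero {s : Set ℝ} (hs : volume s = 0) :
    IsTotallyDisconnected s := by
  rw [isTotallyDisconnected_iff_lt]
  intro x _ y _ hxy
  by_contra! h
  have hIoo : Ioo x y ⊆ s := fun z hz => by_contra fun hzs => h z hzs hz
  exact ((Measure.measure_Ioo_pos volume).2 hxy).ne' (measure_mono_null hIoo hs)

section Appendix

variable {ε lam : ℝ} {f g : ℝ → ℝ}

lemma InclusionProp.mapsTo_left (h : InclusionProp f g ε) :
    MapsTo f (Im1 ε ∪ Iz ε ∪ Ip1 ε) (Im1 ε ∪ Iz ε ∪ Ip1 ε) := by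
  obtain ⟨h₁, h₂, h₃, -, -, -⟩ := h
  rintro x ((hx | hx) | hx)
  · exact Or.inl (Or.inl (h₁ (mem_image_of_mem f hx)))
  · exact Or.inl (Or.inl (interior_subset (h₂ (mem_image_of_mem f hx))))
  · exact Or.inl (Or.inr (interior_subset (h₃ (mem_image_of_mem f hx))))

lemma InclusionProp.mapsTo_right (h : InclusionProp f g ε) :
    MapsTo g (Im1 ε ∪ Iz ε ∪ Ip1 ε) (Im1 ε ∪ Iz ε ∪ Ip1 ε) := by
  obtain ⟨-, -, -, h₁, h₂, h₃⟩ := h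
  rintro x ((hx | hx) | hx)
  · exact Or.inl (Or.inr (interior_subset (h₃ (mem_image_of_mem g hx))))
  · exact Or.inr (interior_subset (h₂ (mem_image_of_mem g hx)))
  · exact Or.inr (h₁ (mem_image_of_mem g hx))

lemma InclusionProp.left_left_mem_Im1 (h : InclusionProp f g ε) (hA : MemA f g) (hε : ε ≤ 1/3)
    {x : ℝ} (hx : x ∈ unitI) : f (f x) ∈ Im1 ε := by
  have h1 : (1 : ℝ) ∈ unitI := ⟨zero_le_one, le_rfl⟩
  obtain ⟨-, hIz, hIp1, -, -, -⟩ := h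
  have hf1 : f 1 ∈ Iz ε := interior_subset (hIp1 (mem_image_of_mem f ⟨by linarith, le_rfl⟩))
  have hff1 : f (f 1) ∈ Im1 ε := interior_subset (hIz (mem_image_of_mem f hf1))
  have hmono := hA.strictMonoOn_left.monotoneOn
  refine ⟨(hA.f_maps (hA.f_maps hx)).1, le_trans ?_ hff1.2⟩
  exact hmono (hA.f_maps hx) (hA.f_maps h1) (hmono hx h1 hx.2)

lemma shrinksVolumeOn_Im1_union_Iz_union_Ip1 (hε : 0 ≤ ε) (hf : Differentiable ℝ f)
    (hmono : MonotoneOn f unitI) (hderiv : ∀ x ∈ Im1 ε ∪ Iz ε ∪ Ip1 ε, deriv f x < lam) :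
    ShrinksVolumeOn f (ENNReal.ofReal lam) (Im1 ε ∪ Iz ε ∪ Ip1 ε) := by
  have hIm1 := shrinksVolumeOn_Icc hf (hmono.mono (Icc_subset_Icc le_rfl (by linarith)))
    fun x hx => hderiv x (Or.inl (Or.inl hx))
  have hIz := shrinksVolumeOn_Icc hf (hmono.mono (Icc_subset_Icc (by linarith) (by linarith)))
    fun x hx => hderiv x (Or.inl (Or.inr hx))
  have hIp1 := shrinksVolumeOn_Icc hf (hmono.mono (Icc_subset_Icc (by linarith) le_rfl))
    fun x hx => hderiv x (Or.inr hx)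
  exact (hIm1.union measurableSet_Icc hIz).union (measurableSet_Icc.union measurableSet_Icc) hIp1

end Appendix

theorem appendix_minimal_set_is_cantor_general (ε lam : ℝ)
    (hε0 : 0 < ε) (hε : ε < 1/6) (hlam : lam < 1/2)
    (f g : ℝ → ℝ) (K : Set ℝ) (hA : MemA f g)
    (hinc : InclusionProp f g ε) (hcon : StrongContraction f g ε lam)
    (hK : IsMinimalSet f g K) :
    K.Nonempty ∧ IsCompact K ∧ Perfect K ∧ IsTotallyDisconnected K := by
  have hfc : Continuous f := hA.f_c1.continuous
  have hgc : Continuous g := hA.g_c1.continuous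
  obtain ⟨x, hx⟩ := hK.1
  have hKΛ : K ⊆ Im1 ε ∪ Iz ε ∪ Ip1 ε :=
    hK.subset_of_mapsTo ((isClosed_Icc.union isClosed_Icc).union isClosed_Icc)
      hinc.mapsTo_left hinc.mapsTo_right (hK.mapsTo_left (hK.mapsTo_left hx))
      (Or.inl (Or.inl (hinc.left_left_mem_Im1 hA (by linarith) (hK.subset_unitI hx))))
  have hC : 2 * ENNReal.ofReal lam < 1 := by
    rw [← ENNReal.ofReal_ofNat 2, ← ENNReal.ofReal_mul zero_le_two]
    exact ENNReal.ofReal_lt_one.2 (by linarith)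
  have hnull : volume K = 0 :=
    volume_eq_zero_of_subset_image_union hC hK.isCompact.measure_lt_top.ne hKΛ
      (shrinksVolumeOn_Im1_union_Iz_union_Ip1 hε0.le (hA.f_c1.differentiable one_ne_zero)
        hA.strictMonoOn_left.monotoneOn fun y hy => (hcon y hy).1)
      (shrinksVolumeOn_Im1_union_Iz_union_Ip1 hε0.le (hA.g_c1.differentiable one_ne_zero)
        hA.strictMonoOn_right.monotoneOn fun y hy => (hcon y hy).2)
      (hK.subset_image_union_image hfc hgc)
  have hinj : ∀ w, InjOn (word f g w) K := fun w =>
    (word_injOn hA.f_maps hA.g_maps hA.f_inj hA.g_inj w).mono hK.subset_unitI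
  exact ⟨⟨x, hx⟩, hK.isCompact, ⟨hK.isClosed, hK.preperfect hfc hgc hinj (hK.infinite hA)⟩,
    isTotallyDisconnected_of_volume_eq_zero hnull⟩

/-- appendix example: under the inclusion property and the strong uniform
contraction property, the unique minimal set `K` is homeomorphic to the Cantor set,
i.e. `K` is nonempty, compact, perfect and totally disconnected. -/
theorem appendix_minimal_set_is_cantor (ε lam : ℝ)
    (hε0 : 0 < ε) (hε : ε < 1/6) (hlam0 : 0 < lam) (hlam : lam < 1/2)
    (f g : ℝ → ℝ) (K : Set ℝ) (hA : MemA f g)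
    (hinc : InclusionProp f g ε) (hcon : StrongContraction f g ε lam)
    (hK : IsMinimalSet f g K) :
    K.Nonempty ∧ IsCompact K ∧ Perfect K ∧ IsTotallyDisconnected K :=
  appendix_minimal_set_is_cantor_general ε lam hε0 hε hlam f g K hA hinc hcon hK

end IFSPaper
end
end

section
/- Fix ε∈(0,1/6) and λ∈(0,1/2), set I₋₁:=[0,1/3−ε], I₀:=[1/3+ε,2/3−ε], I₁:=[2/3+ε,1], and let (f,g) ∈ 𝒜 satisfy the inclusion property (f(I₋₁)⊆I₋₁, f(I₀)⊆int(I₋₁), f(I₁)⊆int(I₀), g(I₁)⊆I₁, g(I₀)⊆int(I₁), g(I₋₁)⊆int(I₀)) and the strong uniform contraction property (f′(x)<λ and g′(x)<λ for all x∈I₋₁∪I₀∪I₁). Define Λ₀:=I₋₁∪I₀∪I₁ and Λ_{k+1}:=f(Λ_k)∪g(Λ_k). Then (Λₙ) is a nested decreasing sequence of compact sets, and the Lebesgue measure satisfies μ(Λₙ) ≤ (2λ)ⁿ for every n ≥ 0. -/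
open Set Function MeasureTheory

noncomputable section

namespace IFSPaper

lemma volume_image_le_of_abs_deriv_le {h h' : ℝ → ℝ} {s : Set ℝ} {C : ℝ}
    (hs : MeasurableSet s) (hd : ∀ x ∈ s, HasDerivWithinAt h (h' x) s x)
    (hC : ∀ x ∈ s, |h' x| ≤ C) :
    volume (h '' s) ≤ ENNReal.ofReal C * volume s :=
  calc volume (h '' s)
      ≤ ∫⁻ x in s, ENNReal.ofReal |((1 : ℝ →L[ℝ] ℝ).smulRight (h' x)).det| :=
        addHaar_image_le_lintegral_abs_det_fderiv volume hs fun x hx =>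
          (hd x hx).hasFDerivWithinAt
    _ ≤ ∫⁻ _ in s, ENNReal.ofReal C := by
        refine setLIntegral_mono' hs fun x hx => ?_
        simpa only [ContinuousLinearMap.smulRight_one_eq_toSpanSingleton,
          ContinuousLinearMap.det_toSpanSingleton] using ENNReal.ofReal_le_ofReal (hC x hx)
    _ = ENNReal.ofReal C * volume s := setLIntegral_const s _

lemma deriv_pos_of_deriv_ne_zero {h : ℝ → ℝ} {a b : ℝ} (hC1 : ContDiff ℝ 1 h)
    (hne : ∀ x ∈ Icc a b, deriv h x ≠ 0) (hlt : h a < h b) :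
    ∀ x ∈ Icc a b, 0 < deriv h x := by
  intro x hx
  have hab : a < b := lt_of_le_of_ne (hx.1.trans hx.2) (by rintro rfl; exact hlt.false)
  obtain ⟨c, hc, hc_slope⟩ := exists_deriv_eq_slope h hab hC1.continuous.continuousOn
    (hC1.differentiable one_ne_zero).differentiableOn
  have hc_pos : 0 < deriv h c := hc_slope ▸ div_pos (sub_pos.2 hlt) (sub_pos.2 hab)
  by_contra! hx_nonpos
  obtain ⟨y, hy, hy_zero⟩ := isPreconnected_Icc.intermediate_value hx (Ioo_subset_Icc_self hc)
    (hC1.continuous_deriv le_rfl).continuousOn ⟨hx_nonpos, hc_pos.le⟩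
  exact hne y hy hy_zero

section ImageUnionIterate

variable {f g : ℝ → ℝ} {Λ : ℕ → Set ℝ}
  (hΛs : ∀ k, Λ (k + 1) = f '' Λ k ∪ g '' Λ k)
include hΛs

lemma isCompact_of_image_union_iterate (hf : Continuous f) (hg : Continuous g)
    (h0 : IsCompact (Λ 0)) (n : ℕ) : IsCompact (Λ n) := by
  induction n with
  | zero => exact h0
  | succ k ih => exact hΛs k ▸ (ih.image hf).union (ih.image hg)

lemma antitone_of_image_union_iterate (h10 : Λ 1 ⊆ Λ 0) : Antitone Λ := by
  refine antitone_nat_of_succ_le fun n => ?_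
  induction n with
  | zero => exact h10
  | succ k ih =>
    rw [hΛs (k + 1)]
    exact (union_subset_union (image_mono ih) (image_mono ih)).trans (hΛs k).superset

lemma volume_le_pow_of_image_union_iterate {f' g' : ℝ → ℝ} {lam : ℝ} (hlam : 0 ≤ lam)
    (hanti : Antitone Λ) (hmeas : ∀ n, MeasurableSet (Λ n))
    (hf : ∀ x ∈ Λ 0, HasDerivAt f (f' x) x) (hg : ∀ x ∈ Λ 0, HasDerivAt g (g' x) x)
    (hf' : ∀ x ∈ Λ 0, |f' x| ≤ lam) (hg' : ∀ x ∈ Λ 0, |g' x| ≤ lam) (n : ℕ) :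
    volume (Λ n) ≤ ENNReal.ofReal ((2 * lam) ^ n) * volume (Λ 0) := by
  induction n with
  | zero => simp
  | succ k ih =>
    have hk : Λ k ⊆ Λ 0 := hanti k.zero_le
    have image_le {h h' : ℝ → ℝ} (hd : ∀ x ∈ Λ 0, HasDerivAt h (h' x) x)
        (hb : ∀ x ∈ Λ 0, |h' x| ≤ lam) :
        volume (h '' Λ k) ≤ ENNReal.ofReal lam * volume (Λ k) :=
      volume_image_le_of_abs_deriv_le (hmeas k) (fun x hx => (hd x (hk hx)).hasDerivWithinAt)
        fun x hx => hb x (hk hx)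
    calc volume (Λ (k + 1))
        ≤ ENNReal.ofReal lam * volume (Λ k) + ENNReal.ofReal lam * volume (Λ k) :=
          hΛs k ▸ (measure_union_le _ _).trans (add_le_add (image_le hf hf') (image_le hg hg'))
      _ = ENNReal.ofReal (2 * lam) * volume (Λ k) := by
          rw [← two_mul, ← mul_assoc, ENNReal.ofReal_mul zero_le_two, ENNReal.ofReal_ofNat]
      _ ≤ ENNReal.ofReal (2 * lam) * (ENNReal.ofReal ((2 * lam) ^ k) * volume (Λ 0)) := by
          gcongr
      _ = ENNReal.ofReal ((2 * lam) ^ (k + 1)) * volume (Λ 0) := by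
          rw [← mul_assoc, ← ENNReal.ofReal_mul (by positivity), pow_succ']

end ImageUnionIterate

lemma Im1_union_Iz_union_Ip1_subset_unitI {ε : ℝ} (hε : 0 ≤ ε) :
    Im1 ε ∪ Iz ε ∪ Ip1 ε ⊆ unitI :=
  union_subset (union_subset (Icc_subset_Icc le_rfl (by linarith))
    (Icc_subset_Icc (by linarith) (by linarith))) (Icc_subset_Icc (by linarith) le_rfl)

lemma InclusionProp.image_union_subset {f g : ℝ → ℝ} {ε : ℝ} (h : InclusionProp f g ε) :
    f '' (Im1 ε ∪ Iz ε ∪ Ip1 ε) ∪ g '' (Im1 ε ∪ Iz ε ∪ Ip1 ε) ⊆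
      Im1 ε ∪ Iz ε ∪ Ip1 ε := by
  obtain ⟨hf_m, hf_0, hf_1, hg_1, hg_0, hg_m⟩ := h
  rintro _ (⟨x, (hx | hx) | hx, rfl⟩ | ⟨x, (hx | hx) | hx, rfl⟩)
  · exact .inl (.inl (hf_m (mem_image_of_mem f hx)))
  · exact .inl (.inl (interior_subset (hf_0 (mem_image_of_mem f hx))))
  · exact .inl (.inr (interior_subset (hf_1 (mem_image_of_mem f hx))))
  · exact .inl (.inr (interior_subset (hg_m (mem_image_of_mem g hx))))
  · exact .inr (interior_subset (hg_0 (mem_image_of_mem g hx)))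
  · exact .inr (hg_1 (mem_image_of_mem g hx))

lemma MemA.deriv_f_pos {f g : ℝ → ℝ} (hA : MemA f g) : ∀ x ∈ unitI, 0 < deriv f x :=
  deriv_pos_of_deriv_ne_zero hA.f_c1 hA.f_deriv_ne <| by
    linarith [hA.f_zero, hA.g0_pos, hA.g0_lt_f1]

lemma MemA.deriv_g_pos {f g : ℝ → ℝ} (hA : MemA f g) : ∀ x ∈ unitI, 0 < deriv g x :=
  deriv_pos_of_deriv_ne_zero hA.g_c1 hA.g_deriv_ne <| by
    linarith [hA.g_one, hA.g0_pos, hA.g0_lt_f1, hA.f1_lt_one]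

theorem appendix_measure_estimate_general (ε lam : ℝ)
    (hε0 : 0 < ε) (hlam0 : 0 < lam)
    (f g : ℝ → ℝ) (hA : MemA f g)
    (hinc : InclusionProp f g ε) (hcon : StrongContraction f g ε lam)
    (Λ : ℕ → Set ℝ)
    (hΛ0 : Λ 0 = Im1 ε ∪ Iz ε ∪ Ip1 ε)
    (hΛs : ∀ k : ℕ, Λ (k + 1) = f '' Λ k ∪ g '' Λ k) :
    (∀ n : ℕ, IsCompact (Λ n)) ∧ (∀ n : ℕ, Λ (n + 1) ⊆ Λ n) ∧
    (∀ n : ℕ, volume (Λ n) ≤ ENNReal.ofReal ((2 * lam) ^ n)) := by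
  have hΛI : Λ 0 ⊆ unitI := hΛ0 ▸ Im1_union_Iz_union_Ip1_subset_unitI hε0.le
  have hcompact := isCompact_of_image_union_iterate hΛs hA.f_c1.continuous hA.g_c1.continuous
    (hΛ0 ▸ (isCompact_Icc.union isCompact_Icc).union isCompact_Icc)
  have hanti : Antitone Λ :=
    antitone_of_image_union_iterate hΛs (hΛs 0 ▸ hΛ0 ▸ hinc.image_union_subset)
  have hderiv {h : ℝ → ℝ} (hC1 : ContDiff ℝ 1 h) (x : ℝ) : HasDerivAt h (deriv h x) x :=
    (hC1.differentiable one_ne_zero x).hasDerivAt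
  have habs {h : ℝ → ℝ} (hpos : ∀ x ∈ unitI, 0 < deriv h x)
      (hlt : ∀ x ∈ Λ 0, deriv h x < lam) (x : ℝ) (hx : x ∈ Λ 0) : |deriv h x| ≤ lam :=
    (abs_of_pos (hpos x (hΛI hx))).le.trans_lt (hlt x hx) |>.le
  refine ⟨hcompact, fun n => hanti n.le_succ, fun n => ?_⟩
  calc volume (Λ n)
      ≤ ENNReal.ofReal ((2 * lam) ^ n) * volume (Λ 0) :=
        volume_le_pow_of_image_union_iterate hΛs hlam0.le hanti
          (fun k => (hcompact k).measurableSet)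
          (fun x _ => hderiv hA.f_c1 x) (fun x _ => hderiv hA.g_c1 x)
          (habs hA.deriv_f_pos fun x hx => (hcon x (hΛ0 ▸ hx)).1)
          (habs hA.deriv_g_pos fun x hx => (hcon x (hΛ0 ▸ hx)).2) n
    _ ≤ ENNReal.ofReal ((2 * lam) ^ n) * volume unitI := by gcongr
    _ = ENNReal.ofReal ((2 * lam) ^ n) := by simp [unitI]

/-- appendix example: with `Λ₀ = I₋₁ ∪ I₀ ∪ I₁` and
`Λ_{k+1} = f(Λ_k) ∪ g(Λ_k)`, the `Λₙ` form a nested decreasing sequence of compact sets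
with `μ(Λₙ) ≤ (2λ)ⁿ`. -/
theorem appendix_measure_estimate (ε lam : ℝ)
    (hε0 : 0 < ε) (hε : ε < 1/6) (hlam0 : 0 < lam) (hlam : lam < 1/2)
    (f g : ℝ → ℝ) (hA : MemA f g)
    (hinc : InclusionProp f g ε) (hcon : StrongContraction f g ε lam)
    (Λ : ℕ → Set ℝ)
    (hΛ0 : Λ 0 = Im1 ε ∪ Iz ε ∪ Ip1 ε)
    (hΛs : ∀ k : ℕ, Λ (k + 1) = f '' Λ k ∪ g '' Λ k) :
    (∀ n : ℕ, IsCompact (Λ n)) ∧ (∀ n : ℕ, Λ (n + 1) ⊆ Λ n) ∧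
    (∀ n : ℕ, volume (Λ n) ≤ ENNReal.ofReal ((2 * lam) ^ n)) :=
  appendix_measure_estimate_general ε lam hε0 hlam0 f g hA hinc hcon Λ hΛ0 hΛs

end IFSPaper
end
end
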